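/- arXiv:2210.12793 — 3 statements merged into one kernel-verified Lean document; each statement's English description precedes it below -/
import Mathlib

section
/- Let k be a field whose characteristic is 0 or a prime not dividing |G|. The ring of components R(G,ξ), defined as the monoid algebra k[Comp(G,ξ)] of the monoid of components over k, is a commutative k-algebra and is finitely generated as a k-algebra. -/
open scoped Classical

/-- One Hurwitz braid move: replace adjacent entries `a, b` by `a*b*a⁻¹, a`. -/
inductive BraidMove (G : Type*) [Group G] : List G → List G → Prop
  | mk (l₁ l₂ : List G) (a b : G) :
      BraidMove G (l₁ ++ a :: b :: l₂) (l₁ ++ (a * b * a⁻¹) :: a :: l₂)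

/-- Braid equivalence of tuples: the equivalence relation generated by Hurwitz moves. -/
def BraidEquiv (G : Type*) [Group G] : List G → List G → Prop :=
  Relation.EqvGen (BraidMove G)

theorem BraidMove.append_right {G : Type*} [Group G] {l l' : List G} (m : List G)
    (h : BraidMove G l l') : BraidMove G (l ++ m) (l' ++ m) := by
  cases h with
  | mk l₁ l₂ a b =>
    simpa only [List.append_assoc, List.cons_append] using BraidMove.mk (G := G) l₁ (l₂ ++ m) a b

theorem BraidMove.append_left {G : Type*} [Group G] {l l' : List G} (m : List G)
    (h : BraidMove G l l') : BraidMove G (m ++ l) (m ++ l') := by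
  cases h with
  | mk l₁ l₂ a b =>
    simpa only [← List.append_assoc] using BraidMove.mk (G := G) (m ++ l₁) l₂ a b

theorem BraidEquiv.append_right {G : Type*} [Group G] {l l' : List G} (m : List G)
    (h : BraidEquiv G l l') : BraidEquiv G (l ++ m) (l' ++ m) := by
  induction h with
  | rel x y hxy => exact Relation.EqvGen.rel _ _ (hxy.append_right m)
  | refl x => exact Relation.EqvGen.refl _
  | symm x y _ ih => exact Relation.EqvGen.symm _ _ ih
  | trans x y z _ _ ih₁ ih₂ => exact Relation.EqvGen.trans _ _ _ ih₁ ih₂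

theorem BraidEquiv.append_left {G : Type*} [Group G] {l l' : List G} (m : List G)
    (h : BraidEquiv G l l') : BraidEquiv G (m ++ l) (m ++ l') := by
  induction h with
  | rel x y hxy => exact Relation.EqvGen.rel _ _ (hxy.append_left m)
  | refl x => exact Relation.EqvGen.refl _
  | symm x y _ ih => exact Relation.EqvGen.symm _ _ ih
  | trans x y z _ _ ih₁ ih₂ => exact Relation.EqvGen.trans _ _ _ ih₁ ih₂

theorem BraidEquiv.append {G : Type*} [Group G] {a b c d : List G}
    (h₁ : BraidEquiv G a b) (h₂ : BraidEquiv G c d) : BraidEquiv G (a ++ c) (b ++ d) :=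
  Relation.EqvGen.trans _ _ _ (h₁.append_right c) (h₂.append_left b)

/-- The setoid of braid equivalence on tuples of elements of `G`. -/
def braidSetoid (G : Type*) [Group G] : Setoid (List G) :=
  Relation.EqvGen.setoid (BraidMove G)

/-- Braid-equivalence classes of tuples of elements of `G`. -/
def HurwitzCl (G : Type*) [Group G] : Type _ :=
  Quotient (braidSetoid G)

/-- Concatenation endows the set of braid-equivalence classes with a monoid structure,
the class of the empty tuple being the identity. -/
instance (G : Type*) [Group G] : Monoid (HurwitzCl G) where
  mul := Quotient.map₂ (· ++ ·) fun _ _ h₁ _ _ h₂ => BraidEquiv.append h₁ h₂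
  one := Quotient.mk (braidSetoid G) []
  mul_assoc a b c := by
    refine Quotient.inductionOn₃ a b c fun a b c => ?_
    exact congrArg (Quotient.mk _) (List.append_assoc a b c)
  one_mul a := by
    refine Quotient.inductionOn a fun a => ?_
    rfl
  mul_one a := by
    refine Quotient.inductionOn a fun a => ?_
    exact congrArg (Quotient.mk _) (List.append_nil a)

/-- The braid-equivalence class of a tuple. -/
def HurwitzCl.mk {G : Type*} [Group G] (l : List G) : HurwitzCl G :=
  Quotient.mk (braidSetoid G) l

theorem HurwitzCl.mk_mul {G : Type*} [Group G] (l l' : List G) :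
    HurwitzCl.mk l * HurwitzCl.mk l' = HurwitzCl.mk (l ++ l') := rfl

/-- The total weight `|ξ| = ∑_{c ∈ D} ξ(c)`. -/
def totalXi {G : Type*} [Group G] (D : Finset (ConjClasses G)) (ξ : ConjClasses G → ℕ) : ℕ :=
  ∑ c ∈ D, ξ c

/-- `l` is a tuple representing a component of degree `n`: it has product `1`,
length `n·|ξ|`, and exactly `n·ξ(c)` entries in the class `c`, for each `c ∈ D`. -/
def IsComponentList {G : Type*} [Group G] (D : Finset (ConjClasses G))
    (ξ : ConjClasses G → ℕ) (n : ℕ) (l : List G) : Prop :=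
  l.prod = 1 ∧ l.length = n * totalXi D ξ ∧
    ∀ c ∈ D, l.countP (fun x => decide (ConjClasses.mk x = c)) = n * ξ c

/-- The monoid of components `Comp(G,ξ)`, as a submonoid of the monoid of
braid-equivalence classes of tuples under concatenation. -/
def Comp {G : Type*} [Group G] (D : Finset (ConjClasses G)) (ξ : ConjClasses G → ℕ) :
    Submonoid (HurwitzCl G) where
  carrier := {x | ∃ n l, x = HurwitzCl.mk l ∧ IsComponentList D ξ n l}
  one_mem' := ⟨0, [], rfl, by simp [IsComponentList]⟩
  mul_mem' := by
    rintro x y ⟨n, l, rfl, hl1, hl2, hl3⟩ ⟨n', l', rfl, hl1', hl2', hl3'⟩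
    refine ⟨n + n', l ++ l', rfl, ?_, ?_, ?_⟩
    · simp [List.prod_append, hl1, hl1']
    · simp [hl2, hl2', add_mul]
    · intro c hc
      simp [List.countP_append, hl3 c hc, hl3' c hc, add_mul]


/-!
A tuple with product `1` can be braided past any other tuple: moving an entry `x` leftwards across
a tuple `l` conjugates `x` by `l.prod`. Hence `Comp(G,ξ)` is commutative.

For finite generation, let `l` represent a component of degree `n ≥ |G|²`. Each class `c ∈ D`
occurs `n ξ(c) ≥ |G| · |G| ξ(c)` times in `l`, so by pigeonhole some `g ∈ c` occurs at least
`|G| ξ(c)` times. Braiding these copies of `g` to the front conjugates the entries they pass but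
keeps the class counts, so this can be repeated class by class. It splits off the block
`∏_c g_c ^ (|G| ξ(c))`, which has product `1` and is a component of degree `|G|`, leaving a
component of degree `n - |G|`. So the finitely many components of degree `≤ |G|²` generate
`Comp(G,ξ)`, and its monoid algebra is a finitely generated commutative `k`-algebra.
-/

section Braid

variable {G : Type*} [Group G] {l l' l'' : List G}

theorem BraidEquiv.refl (l : List G) : BraidEquiv G l l := Relation.EqvGen.refl l

theorem BraidEquiv.symm (h : BraidEquiv G l l') : BraidEquiv G l' l := Relation.EqvGen.symm _ _ h

theorem BraidEquiv.trans (h : BraidEquiv G l l') (h' : BraidEquiv G l' l'') : BraidEquiv G l l'' :=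
  Relation.EqvGen.trans _ _ _ h h'

theorem BraidMove.braidEquiv (h : BraidMove G l l') : BraidEquiv G l l' := Relation.EqvGen.rel _ _ h

theorem BraidEquiv.eq_of_invariant {β : Type*} (f : List G → β)
    (hf : ∀ ⦃l l'⦄, BraidMove G l l' → f l = f l') (h : BraidEquiv G l l') : f l = f l' :=
  (Setoid.ker f).iseqv.eqvGen_iff.1 (h.mono hf)

theorem BraidEquiv.prod_eq (h : BraidEquiv G l l') : l.prod = l'.prod :=
  h.eq_of_invariant List.prod fun _ _ ⟨l₁, l₂, a, b⟩ => by
    simp only [List.prod_append, List.prod_cons]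
    group

theorem BraidEquiv.length_eq (h : BraidEquiv G l l') : l.length = l'.length :=
  h.eq_of_invariant List.length fun _ _ ⟨l₁, l₂, a, b⟩ => by simp

theorem BraidEquiv.countP_eq (p : G → Bool) (hp : ∀ a b, p (a * b * a⁻¹) = p b)
    (h : BraidEquiv G l l') : l.countP p = l'.countP p :=
  h.eq_of_invariant (List.countP p) fun _ _ ⟨l₁, l₂, a, b⟩ => by
    simp only [List.countP_append, List.countP_cons, hp]
    omega

theorem braidEquiv_append_singleton (l : List G) (x : G) :
    BraidEquiv G (l ++ [x]) ((l.prod * x * l.prod⁻¹) :: l) := by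
  induction l with
  | nil => simpa using BraidEquiv.refl _
  | cons a t ih =>
    have hmove : BraidMove G (a :: (t.prod * x * t.prod⁻¹) :: t)
        (((a :: t).prod * x * (a :: t).prod⁻¹) :: a :: t) := by
      simpa [mul_assoc] using BraidMove.mk [] t a (t.prod * x * t.prod⁻¹)
    exact (ih.append_left [a]).trans hmove.braidEquiv

theorem braidEquiv_append_comm_of_prod_eq_one (h : l.prod = 1) (l' : List G) :
    BraidEquiv G (l ++ l') (l' ++ l) := by
  induction l' with
  | nil => simpa using BraidEquiv.refl _
  | cons x s ih =>
    have hx : BraidEquiv G (l ++ [x] ++ s) (x :: l ++ s) := by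
      simpa [h] using (braidEquiv_append_singleton l x).append_right s
    simpa using hx.trans (ih.append_left [x])

theorem braidEquiv_append_singleton_conj (l : List G) (g : G) :
    BraidEquiv G (l ++ [g]) (g :: l.map (fun a => g⁻¹ * a * g)) := by
  induction l with
  | nil => exact BraidEquiv.refl _
  | cons a t ih =>
    have hmove : BraidMove G (g :: (g⁻¹ * a * g) :: t.map (fun a => g⁻¹ * a * g))
        (a :: g :: t.map (fun a => g⁻¹ * a * g)) := by
      simpa [mul_assoc] using BraidMove.mk [] (t.map (fun a => g⁻¹ * a * g)) g (g⁻¹ * a * g)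
    exact (ih.append_left [a]).trans hmove.braidEquiv.symm

theorem exists_braidEquiv_replicate_append {g : G} :
    ∀ {t : ℕ} {l : List G}, t ≤ l.count g → ∃ r, BraidEquiv G l (List.replicate t g ++ r)
  | 0, l, _ => ⟨l, BraidEquiv.refl _⟩
  | t + 1, l, h => by
    obtain ⟨l₁, l₂, rfl⟩ := List.append_of_mem (List.count_pos_iff.1 (by omega : 0 < l.count g))
    have hconj : Function.Injective fun a => g⁻¹ * a * g := fun a b hab => by simpa using hab
    have hmap : (l₁.map fun a => g⁻¹ * a * g).count g = l₁.count g := by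
      simpa using List.count_map_of_injective l₁ _ hconj g
    have hcount : t ≤ (l₁.map (fun a => g⁻¹ * a * g) ++ l₂).count g := by
      simp only [List.count_append, hmap, List.count_cons_self] at h ⊢
      omega
    obtain ⟨r, hr⟩ := exists_braidEquiv_replicate_append hcount
    refine ⟨r, BraidEquiv.trans ?_ (hr.append_left [g])⟩
    simpa using (braidEquiv_append_singleton_conj l₁ g).append_right l₂

end Braid

section ClassCount

variable {G : Type*} [Group G]

noncomputable def classCount (c : ConjClasses G) (l : List G) : ℕ :=
  l.countP fun x => decide (ConjClasses.mk x = c)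

theorem classCount_append (c : ConjClasses G) (l l' : List G) :
    classCount c (l ++ l') = classCount c l + classCount c l' :=
  List.countP_append

theorem classCount_replicate (c : ConjClasses G) (t : ℕ) (g : G) :
    classCount c (List.replicate t g) = if ConjClasses.mk g = c then t else 0 := by
  simp [classCount, List.countP_replicate]

theorem BraidEquiv.classCount_eq {l l' : List G} (h : BraidEquiv G l l') (c : ConjClasses G) :
    classCount c l = classCount c l' :=
  h.countP_eq _ fun a b => by
    rw [ConjClasses.mk_eq_mk_iff_isConj.2 (isConj_iff.2 ⟨a, rfl⟩).symm]

theorem classCount_eq_sum_count (c : ConjClasses G) (l : List G) :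
    classCount c l = ∑ x ∈ l.toFinset with ConjClasses.mk x = c, l.count x := by
  rw [Finset.sum_filter_count_eq_countP]
  rfl

theorem exists_mk_eq_le_count [Fintype G] {c : ConjClasses G} {l : List G} {t : ℕ}
    (h : Fintype.card G * t ≤ classCount c l) : ∃ g, ConjClasses.mk g = c ∧ t ≤ l.count g := by
  obtain ⟨g₀, rfl⟩ := ConjClasses.mk_surjective c
  obtain ⟨g, hg, hmax⟩ := Finset.exists_max_image {x | ConjClasses.mk x = ConjClasses.mk g₀}
    l.count ⟨g₀, by simp⟩
  refine ⟨g, by simpa using hg, Nat.le_of_mul_le_mul_left ?_ (Fintype.card_pos (α := G))⟩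
  rw [classCount_eq_sum_count] at h
  refine h.trans ((Finset.sum_le_card_nsmul _ _ _ fun x hx => hmax x ?_).trans ?_)
  · simp_all
  · simpa using Nat.mul_le_mul_right _ (Finset.card_le_univ _)

end ClassCount

section Blocks

variable {G : Type*} [Group G] [Fintype G]

theorem exists_braidEquiv_append_of_classCount (m : ConjClasses G → ℕ) (E : Finset (ConjClasses G))
    {l : List G} (h : ∀ c ∈ E, Fintype.card G * (Fintype.card G * m c) ≤ classCount c l) :
    ∃ P r, BraidEquiv G l (P ++ r) ∧ P.prod = 1 ∧ P.length = ∑ c ∈ E, Fintype.card G * m c ∧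
      ∀ c, classCount c P = if c ∈ E then Fintype.card G * m c else 0 := by
  induction E using Finset.induction_on generalizing l with
  | empty => exact ⟨[], l, BraidEquiv.refl l, rfl, rfl, fun c => rfl⟩
  | @insert c₀ E hc₀ ih =>
    obtain ⟨g, rfl, hg⟩ := exists_mk_eq_le_count (h _ (Finset.mem_insert_self _ E))
    obtain ⟨r₁, h₁⟩ := exists_braidEquiv_replicate_append hg
    have hr₁ : ∀ c ∈ E, Fintype.card G * (Fintype.card G * m c) ≤ classCount c r₁ := by
      intro c hc
      have hne : ConjClasses.mk g ≠ c := fun hgc => hc₀ (hgc ▸ hc)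
      have hcount := h₁.classCount_eq c
      rw [classCount_append, classCount_replicate, if_neg hne, zero_add] at hcount
      exact hcount ▸ h c (Finset.mem_insert_of_mem hc)
    obtain ⟨P, r, h₂, hprod, hlen, hcount⟩ := ih hr₁
    refine ⟨List.replicate (Fintype.card G * m (ConjClasses.mk g)) g ++ P, r,
      h₁.trans (by simpa using h₂.append_left _), ?_, ?_, fun c => ?_⟩
    · rw [List.prod_append, List.prod_replicate, hprod, pow_mul, pow_card_eq_one, one_pow, one_mul]
    · simp [Finset.sum_insert hc₀, hlen]
    · rw [classCount_append, classCount_replicate, hcount]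
      by_cases hc : ConjClasses.mk g = c
      · subst hc
        simp [hc₀]
      · simp [hc, Ne.symm hc]

end Blocks

namespace IsComponentList

variable {G : Type*} [Group G] {D : Finset (ConjClasses G)} {ξ : ConjClasses G → ℕ}

theorem of_braidEquiv_append {m k : ℕ} {l P r : List G} (hl : IsComponentList D ξ (m + k) l)
    (h : BraidEquiv G l (P ++ r)) (hP : IsComponentList D ξ m P) : IsComponentList D ξ k r := by
  obtain ⟨hprod, hlen, hcount⟩ := hl
  obtain ⟨hPprod, hPlen, hPcount⟩ := hP
  refine ⟨?_, ?_, fun c hc => ?_⟩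
  · simpa [hprod, hPprod] using h.prod_eq.symm
  · have hlen' := h.length_eq
    rw [List.length_append, hlen, hPlen, add_mul] at hlen'
    omega
  · have hlc : classCount c l = (m + k) * ξ c := hcount c hc
    have hPc : classCount c P = m * ξ c := hPcount c hc
    have hc' := h.classCount_eq c
    rw [classCount_append, hlc, hPc, add_mul] at hc'
    change classCount c r = _
    omega

theorem exists_braidEquiv_append [Fintype G] {n : ℕ} {l : List G} (hl : IsComponentList D ξ n l)
    (hn : Fintype.card G * Fintype.card G ≤ n) :
    ∃ P r, BraidEquiv G l (P ++ r) ∧ IsComponentList D ξ (Fintype.card G) P ∧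
      IsComponentList D ξ (n - Fintype.card G) r := by
  obtain ⟨P, r, h, hprod, hlen, hcount⟩ := exists_braidEquiv_append_of_classCount ξ D (l := l)
    fun c hc => (mul_assoc _ _ (ξ c)).symm.trans_le <| (Nat.mul_le_mul_right _ hn).trans_eq
      (hl.2.2 c hc).symm
  have hP : IsComponentList D ξ (Fintype.card G) P :=
    ⟨hprod, by rw [hlen, totalXi, Finset.mul_sum], fun c hc => (hcount c).trans (if_pos hc)⟩
  have hcard : Fintype.card G ≤ n := (Nat.le_mul_self _).trans hn
  refine ⟨P, r, h, hP, of_braidEquiv_append ?_ h hP⟩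
  rwa [Nat.add_sub_cancel' hcard]

end IsComponentList

namespace Comp

variable {G : Type*} [Group G] (D : Finset (ConjClasses G)) (ξ : ConjClasses G → ℕ)

theorem mk_mem {n : ℕ} {l : List G} (h : IsComponentList D ξ n l) : HurwitzCl.mk l ∈ Comp D ξ :=
  ⟨n, l, rfl, h⟩

instance : CommMonoid (Comp D ξ) where
  mul_comm := by
    rintro ⟨_, n, l, rfl, hl⟩ ⟨_, n', l', rfl, -⟩
    exact Subtype.ext (Quotient.sound (braidEquiv_append_comm_of_prod_eq_one hl.1 l'))

def lowDegree (B : ℕ) : Set (Comp D ξ) :=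
  {x | ∃ n ≤ B, ∃ l, IsComponentList D ξ n l ∧ (x : HurwitzCl G) = HurwitzCl.mk l}

theorem finite_lowDegree [Finite G] (B : ℕ) : (lowDegree D ξ B).Finite := by
  refine (((List.finite_length_le G (B * totalXi D ξ)).image HurwitzCl.mk).preimage
    Subtype.val_injective.injOn).subset ?_
  rintro x ⟨n, hn, l, ⟨-, hlen, -⟩, hx⟩
  exact ⟨l, hlen.trans_le (Nat.mul_le_mul_right _ hn), hx.symm⟩

theorem closure_lowDegree [Fintype G] :
    Submonoid.closure (lowDegree D ξ (Fintype.card G * Fintype.card G)) = ⊤ := by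
  refine eq_top_iff.2 ?_
  rintro ⟨_, n, l, rfl, hl⟩ -
  induction n using Nat.strong_induction_on generalizing l with
  | _ n ih =>
    by_cases hn : n ≤ Fintype.card G * Fintype.card G
    · exact Submonoid.subset_closure ⟨n, hn, l, hl, rfl⟩
    obtain ⟨P, r, h, hP, hr⟩ := hl.exists_braidEquiv_append (not_le.1 hn).le
    have hsplit : (⟨HurwitzCl.mk l, mk_mem D ξ hl⟩ : Comp D ξ) =
        ⟨HurwitzCl.mk P, mk_mem D ξ hP⟩ * ⟨HurwitzCl.mk r, mk_mem D ξ hr⟩ :=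
      Subtype.ext (Quotient.sound h)
    have hcard : 0 < Fintype.card G := Fintype.card_pos
    rw [hsplit]
    exact mul_mem (ih _ (by nlinarith) P hP) (ih _ (by omega) r hr)

instance [Fintype G] : Monoid.FG (Comp D ξ) :=
  Monoid.fg_iff.2 ⟨_, closure_lowDegree D ξ, finite_lowDegree D ξ _⟩

end Comp

theorem ringOfComponents_commutative_and_finiteType_general
    (G : Type*) [Group G] [Fintype G]
    (k : Type*) [Field k]
    (D : Finset (ConjClasses G))
    (ξ : ConjClasses G → ℕ) :
    (∀ x y : MonoidAlgebra k ↥(Comp D ξ), x * y = y * x) ∧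
      Algebra.FiniteType k (MonoidAlgebra k ↥(Comp D ξ)) :=
  ⟨mul_comm, MonoidAlgebra.finiteType_of_fg⟩

/-- the ring of components `R(G,ξ) = k[Comp(G,ξ)]` is a commutative
`k`-algebra which is finitely generated as a `k`-algebra. -/
theorem ringOfComponents_commutative_and_finiteType
    (G : Type*) [Group G] [Fintype G] [Nontrivial G]
    (k : Type*) [Field k]
    (hchar : CharZero k ∨ ∃ p : ℕ, p.Prime ∧ CharP k p ∧ ¬ p ∣ Fintype.card G)
    (D : Finset (ConjClasses G))
    (hD : ∀ c ∈ D, (1 : G) ∉ ConjClasses.carrier c)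
    (hDgen : Subgroup.closure {g : G | ConjClasses.mk g ∈ D} = ⊤)
    (ξ : ConjClasses G → ℕ) (hξ : ∀ c ∈ D, 1 ≤ ξ c) :
    (∀ x y : MonoidAlgebra k ↥(Comp D ξ), x * y = y * x) ∧
      Algebra.FiniteType k (MonoidAlgebra k ↥(Comp D ξ)) :=
  ringOfComponents_commutative_and_finiteType_general G k D ξ
end

section
/- Let H be a nontrivial D-generated subgroup of G and let exp(G) denote the exponent of G. Then n^{Ω_D(H)} = O(HF_H(exp(G)·n)): there exist a constant C > 0 and N ∈ ℕ such that for all n ≥ N, n^{Ω_D(H)} ≤ C · HF_H(exp(G)·n). -/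
open scoped Classical

/-- A subgroup `H ≤ G` is `D`-generated if either `H = 1`, or `H` meets every class
`c ∈ D` and `H` is generated by `⋃_{c ∈ D} (c ∩ H)`. -/
def DGenerated {G : Type*} [Group G] (D : Finset (ConjClasses G)) (H : Subgroup G) : Prop :=
  H = ⊥ ∨ ((∀ c ∈ D, ∃ g ∈ H, ConjClasses.mk g = c) ∧
    Subgroup.closure {g : G | g ∈ H ∧ ConjClasses.mk g ∈ D} = H)

/-- The splitting number `Ω_D(H) = |D_H| - |D|`, where `D_H` is the set of conjugacy
classes of `H` contained in some class of `D`, i.e. the preimage of `D` under the map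
`τ_H : ConjClasses H → ConjClasses G`. -/
noncomputable def splittingNumber {G : Type*} [Group G] (D : Finset (ConjClasses G))
    (H : Subgroup G) : ℕ :=
  Nat.card (ConjClasses.map H.subtype ⁻¹' (↑D : Set (ConjClasses G))) - D.card

/-- `HF_H(n)`: the number of components of degree `n` whose group is exactly `H`. -/
noncomputable def HF {G : Type*} [Group G] (D : Finset (ConjClasses G))
    (ξ : ConjClasses G → ℕ) (H : Subgroup G) (n : ℕ) : ℕ :=
  Nat.card {x : HurwitzCl G // ∃ l : List G, x = HurwitzCl.mk l ∧
    IsComponentList D ξ n l ∧ Subgroup.closure {g : G | g ∈ l} = H}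

/-!
A tuple built from blocks of `exp(G)` equal entries has product `1` whatever the order of the
blocks. So one block for every element of `H` whose class lies in `D` (which makes the tuple
generate `H`), followed by `exp(G) · m d` copies of a representative of each class `d` of `H`
over `D`, is a component of degree `exp(G) · n` as soon as the multiplicities `m` add up to the
right number over every class of `D`. For tuples with entries in `H`, the multiset of their
`H`-conjugacy classes is a braid invariant, so distinct `m` give distinct components. In the fibre
of `τ_H` over each class of `D`, all multiplicities but one can be chosen freely below `n / K`
for a constant `K`, which gives `(n / K) ^ Ω_D(H)` components.
-/

open Finset

section BlockList

variable {α ι : Type*}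

noncomputable def blockList (s : Finset ι) (v : ι → α) (k : ι → ℕ) : List α :=
  s.toList.flatMap fun i => List.replicate (k i) (v i)

variable {s : Finset ι} {v : ι → α} {k : ι → ℕ}

theorem mem_blockList {x : α} : x ∈ blockList s v k ↔ ∃ i ∈ s, k i ≠ 0 ∧ v i = x := by
  simp [blockList, List.mem_flatMap, List.mem_replicate, eq_comm]

theorem countP_blockList (p : α → Bool) :
    (blockList s v k).countP p = ∑ i ∈ s with p (v i), k i := by
  rw [blockList, List.countP_flatMap, Finset.sum_filter, ← Finset.sum_map_toList]
  simp [List.countP_replicate]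

theorem prod_blockList [Monoid α] (h : ∀ i ∈ s, v i ^ k i = 1) : (blockList s v k).prod = 1 := by
  rw [blockList, List.flatMap_def, List.prod_flatten]
  refine List.prod_eq_one fun x hx => ?_
  simp only [List.map_map, List.mem_map, Function.comp_apply, List.prod_replicate,
    Finset.mem_toList] at hx
  obtain ⟨i, hi, rfl⟩ := hx
  exact h i hi

end BlockList

section ConjClassIn

variable {G : Type*} [Group G] (H : Subgroup G)

noncomputable def conjClassIn (g : G) : Option (ConjClasses H) :=
  if h : g ∈ H then some (ConjClasses.mk ⟨g, h⟩) else none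

variable {H}

theorem conjClassIn_of_mem {g : G} (hg : g ∈ H) :
    conjClassIn H g = some (ConjClasses.mk ⟨g, hg⟩) :=
  dif_pos hg

theorem conjClassIn_eq_none {g : G} : conjClassIn H g = none ↔ g ∉ H := by
  unfold conjClassIn
  split_ifs with hg <;> simp [hg]

theorem conjClassIn_conj {a : G} (ha : a ∈ H) (b : G) :
    conjClassIn H (a * b * a⁻¹) = conjClassIn H b := by
  by_cases hb : b ∈ H
  · have hconj : a * b * a⁻¹ ∈ H := mul_mem (mul_mem ha hb) (inv_mem ha)
    rw [conjClassIn_of_mem hb, conjClassIn_of_mem hconj, Option.some_inj,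
      ConjClasses.mk_eq_mk_iff_isConj, isConj_comm, isConj_iff]
    exact ⟨⟨a, ha⟩, Subtype.ext rfl⟩
  · have hconj : a * b * a⁻¹ ∉ H := by
      rwa [mul_mem_cancel_right (inv_mem ha), mul_mem_cancel_left ha]
    rw [conjClassIn_eq_none.mpr hb, conjClassIn_eq_none.mpr hconj]

theorem forall_mem_of_perm_map_conjClassIn {l l' : List G}
    (h : (l.map (conjClassIn H)).Perm (l'.map (conjClassIn H))) (hl : ∀ x ∈ l, x ∈ H) :
    ∀ x ∈ l', x ∈ H := by
  intro x hx
  by_contra hxH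
  have hnone : none ∈ l.map (conjClassIn H) :=
    h.symm.mem_iff.mp (List.mem_map.mpr ⟨x, hx, conjClassIn_eq_none.mpr hxH⟩)
  obtain ⟨y, hy, hyH⟩ := List.mem_map.mp hnone
  exact conjClassIn_eq_none.mp hyH (hl y hy)

theorem BraidMove.perm_map_conjClassIn {l l' : List G} (h : BraidMove G l l')
    (hH : (∀ x ∈ l, x ∈ H) ∨ ∀ x ∈ l', x ∈ H) :
    (l.map (conjClassIn H)).Perm (l'.map (conjClassIn H)) := by
  obtain ⟨l₁, l₂, a, b⟩ := h
  have ha : a ∈ H := hH.elim (· a (by simp)) (· a (by simp))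
  simpa [conjClassIn_conj ha] using (List.Perm.swap _ _ _).append_left _

theorem BraidEquiv.perm_map_conjClassIn {l l' : List G} (h : BraidEquiv G l l')
    (hl : ∀ x ∈ l, x ∈ H) :
    (l.map (conjClassIn H)).Perm (l'.map (conjClassIn H)) := by
  suffices ∀ {l l'}, BraidEquiv G l l' → ((∀ x ∈ l, x ∈ H) ∨ ∀ x ∈ l', x ∈ H) →
      (l.map (conjClassIn H)).Perm (l'.map (conjClassIn H)) from this h (.inl hl)
  intro l l' h
  induction h with
  | rel x y hxy => exact hxy.perm_map_conjClassIn
  | refl x => exact fun _ => .refl _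
  | symm x y _ ih => exact fun hH => (ih hH.symm).symm
  | trans x y z _ _ ih₁ ih₂ =>
    rintro (hx | hz)
    · have hxy := ih₁ (.inl hx)
      exact hxy.trans (ih₂ (.inl (forall_mem_of_perm_map_conjClassIn hxy hx)))
    · have hyz := ih₂ (.inr hz)
      exact (ih₁ (.inr (forall_mem_of_perm_map_conjClassIn hyz.symm hz))).trans hyz

end ConjClassIn

theorem exists_fiberwise_sum_eq {ι κ : Type*} [Fintype ι] [DecidableEq ι] [DecidableEq κ]
    (τ : ι → κ) (D : Finset κ) (s : κ → ι) (hs : ∀ c ∈ D, τ (s c) = c) (q : ℕ) (N : κ → ℕ)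
    (hN : ∀ c ∈ D, Fintype.card ι * q ≤ N c) :
    ∃ F : Finset ι, #F = #{i | τ i ∈ D} - #D ∧ (∀ i ∈ F, τ i ∈ D) ∧ ∃ M : (F → Fin q) → ι → ℕ,
      (∀ f (i : F), M f i = f i) ∧ ∀ f, ∀ c ∈ D, ∑ i with τ i = c, M f i = N c := by
  have hsT : D.image s ⊆ ({i | τ i ∈ D} : Finset ι) := by
    intro i hi
    obtain ⟨c, hc, rfl⟩ := Finset.mem_image.mp hi
    simpa [hs c hc] using hc
  have hs_inj : Set.InjOn s D := fun c hc c' hc' h => by rw [← hs c hc, ← hs c' hc', h]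
  set F : Finset ι := ({i | τ i ∈ D} : Finset ι) \ D.image s
  let val (f : F → Fin q) (i : ι) : ℕ := if h : i ∈ F then f ⟨i, h⟩ else 0
  let M (f : F → Fin q) (i : ι) : ℕ :=
    if i ∈ F then val f i else N (τ i) - ∑ j ∈ F with τ j = τ i, val f j
  refine ⟨F, by rw [card_sdiff_of_subset hsT, card_image_of_injOn hs_inj],
    fun i hi => by simpa using (mem_sdiff.mp hi).1, M,
    fun f i => by simp [M, val, i.2], fun f c hc => ?_⟩
  have hfree : ∑ i with τ i = c ∧ i ∈ F, M f i = ∑ j ∈ F with τ j = c, val f j := by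
    exact sum_congr (by ext; simp [and_comm]) fun i hi => if_pos (mem_filter.mp hi).1
  have hfixed : ({i | τ i = c ∧ i ∉ F} : Finset ι) = {s c} := by
    ext i
    simp only [F, mem_filter, mem_univ, true_and, mem_sdiff, mem_image, mem_singleton, not_and,
      not_not]
    constructor
    · rintro ⟨rfl, hi⟩
      obtain ⟨c', hc', rfl⟩ := hi hc
      rw [hs c' hc']
    · rintro rfl
      exact ⟨hs c hc, fun _ => ⟨c, hc, rfl⟩⟩
  have hle : ∑ j ∈ F with τ j = c, val f j ≤ N c := calc
    _ ≤ #{j ∈ F | τ j = c} * q := by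
      refine sum_le_card_nsmul _ _ _ fun j hj => ?_
      simp only [val, dif_pos (mem_filter.mp hj).1]
      exact (f _).isLt.le
    _ ≤ Fintype.card ι * q := Nat.mul_le_mul_right _ (card_le_univ _)
    _ ≤ N c := hN c hc
  rw [← sum_filter_add_sum_filter_not _ (· ∈ F), filter_filter, filter_filter, hfree, hfixed,
    sum_singleton]
  have hsF : s c ∉ F := fun h => (mem_sdiff.mp h).2 (mem_image_of_mem s hc)
  simp only [M, if_neg hsF, hs c hc]
  omega

theorem List.length_eq_sum_countP_of_forall_mem {α β : Type*} [DecidableEq β] {l : List α}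
    {f : α → β} {s : Finset β} (h : ∀ x ∈ l, f x ∈ s) :
    l.length = ∑ b ∈ s, l.countP (fun x => decide (f x = b)) := by
  rw [← l.length_map f, ← Multiset.coe_card,
    ← Multiset.sum_count_eq_card (s := s) (by simpa using h)]
  exact sum_congr rfl fun b _ => by rw [Multiset.coe_count, List.count, List.countP_map]; rfl

theorem ConjClasses.mk_coe_rep {G : Type*} [Group G] {H : Subgroup G} (d : ConjClasses H) :
    ConjClasses.mk (d.exists_rep.choose : G) = ConjClasses.map H.subtype d := by
  conv_rhs => rw [← d.exists_rep.choose_spec]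
  rfl

theorem conjClassIn_coe_rep {G : Type*} [Group G] {H : Subgroup G} (d : ConjClasses H) :
    conjClassIn H (d.exists_rep.choose : G) = some d :=
  (conjClassIn_of_mem d.exists_rep.choose.2).trans (congrArg some d.exists_rep.choose_spec)

section PaddedTuple

variable {G : Type*} [Group G] [Fintype G] (D : Finset (ConjClasses G)) (H : Subgroup G)

noncomputable def paddedTuple (m : ConjClasses H → ℕ) : List G :=
  blockList {g | g ∈ H ∧ ConjClasses.mk g ∈ D} id (fun _ => Monoid.exponent G) ++
    blockList {d | ConjClasses.map H.subtype d ∈ D} (fun d => (d.exists_rep.choose : G))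
      (fun d => Monoid.exponent G * m d)

variable {D H} (m : ConjClasses H → ℕ)

theorem prod_paddedTuple : (paddedTuple D H m).prod = 1 := by
  rw [paddedTuple, List.prod_append, prod_blockList, prod_blockList, one_mul] <;>
    intros <;> simp [pow_mul, Monoid.pow_exponent_eq_one]

theorem mem_of_mem_paddedTuple {x : G} (hx : x ∈ paddedTuple D H m) :
    x ∈ H ∧ ConjClasses.mk x ∈ D := by
  rcases List.mem_append.mp hx with hx | hx
  · obtain ⟨g, hg, -, rfl⟩ := mem_blockList.mp hx
    simpa using hg
  · obtain ⟨d, hd, -, rfl⟩ := mem_blockList.mp hx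
    refine ⟨(d.exists_rep.choose).2, ?_⟩
    rw [ConjClasses.mk_coe_rep]
    simpa using hd

theorem closure_paddedTuple
    (hgen : Subgroup.closure {g : G | g ∈ H ∧ ConjClasses.mk g ∈ D} = H) :
    Subgroup.closure {g : G | g ∈ paddedTuple D H m} = H := by
  refine le_antisymm ((Subgroup.closure_le _).mpr fun x hx => (mem_of_mem_paddedTuple m hx).1) ?_
  conv_lhs => rw [← hgen]
  refine Subgroup.closure_mono fun g hg => List.mem_append_left _ (mem_blockList.mpr ?_)
  exact ⟨g, by simpa using hg, Monoid.exponent_ne_zero_of_finite, rfl⟩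

theorem countP_paddedTuple {c : ConjClasses G} (hc : c ∈ D) :
    (paddedTuple D H m).countP (fun x => decide (ConjClasses.mk x = c)) =
      Monoid.exponent G * (#{g | g ∈ H ∧ ConjClasses.mk g = c} +
        ∑ d with ConjClasses.map H.subtype d = c, m d) := by
  rw [paddedTuple, List.countP_append, countP_blockList, countP_blockList, mul_add, sum_const,
    smul_eq_mul, mul_comm, mul_sum, filter_filter, filter_filter]
  congr 1
  · congr 2
    ext g
    simp only [mem_filter, mem_univ, true_and, id, decide_eq_true_eq]
    exact ⟨fun h => ⟨h.1.1, h.2⟩, fun h => ⟨⟨h.1, h.2 ▸ hc⟩, h.2⟩⟩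
  · congr 1
    ext d
    simp only [mem_filter, mem_univ, true_and, ConjClasses.mk_coe_rep, decide_eq_true_eq]
    exact ⟨And.right, fun h => ⟨h ▸ hc, h⟩⟩

theorem isComponentList_paddedTuple (ξ : ConjClasses G → ℕ) (n : ℕ)
    (hm : ∀ c ∈ D, #{g | g ∈ H ∧ ConjClasses.mk g = c} +
      ∑ d with ConjClasses.map H.subtype d = c, m d = n * ξ c) :
    IsComponentList D ξ (Monoid.exponent G * n) (paddedTuple D H m) := by
  have hcount : ∀ c ∈ D, (paddedTuple D H m).countP (fun x => decide (ConjClasses.mk x = c)) =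
      Monoid.exponent G * n * ξ c := fun c hc => by
    rw [countP_paddedTuple m hc, hm c hc, mul_assoc]
  refine ⟨prod_paddedTuple m, ?_, fun c hc => ?_⟩
  · rw [List.length_eq_sum_countP_of_forall_mem fun x hx => (mem_of_mem_paddedTuple m hx).2,
      totalXi, mul_sum]
    exact sum_congr rfl hcount
  · rw [← hcount c hc]
    exact List.countP_congr fun x _ => by simp

theorem apply_eq_of_braidEquiv_paddedTuple {m m' : ConjClasses H → ℕ}
    (h : BraidEquiv G (paddedTuple D H m) (paddedTuple D H m')) {d : ConjClasses H}
    (hd : ConjClasses.map H.subtype d ∈ D) : m d = m' d := by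
  have hcount := (h.perm_map_conjClassIn fun x hx => (mem_of_mem_paddedTuple m hx).1).countP_eq
    (· == some d)
  have hdT : d ∈ ({d | ConjClasses.map H.subtype d ∈ D} : Finset _) := by simpa using hd
  simp only [List.countP_map, paddedTuple, List.countP_append, countP_blockList,
    Function.comp_apply, conjClassIn_coe_rep, beq_iff_eq, Option.some_inj, filter_eq',
    if_pos hdT, sum_singleton, add_right_inj] at hcount
  exact Nat.eq_of_mul_eq_mul_left (Nat.pos_of_ne_zero Monoid.exponent_ne_zero_of_finite) hcount

end PaddedTuple

theorem finite_componentsWithGroup {G : Type*} [Group G] [Finite G] (D : Finset (ConjClasses G))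
    (ξ : ConjClasses G → ℕ) (H : Subgroup G) (n : ℕ) :
    Finite {x : HurwitzCl G // ∃ l : List G, x = HurwitzCl.mk l ∧
      IsComponentList D ξ n l ∧ Subgroup.closure {g : G | g ∈ l} = H} :=
  Set.Finite.to_subtype <| ((List.finite_length_eq G (n * totalXi D ξ)).image HurwitzCl.mk).subset
    fun _ ⟨l, hx, hl, _⟩ => ⟨l, hl.2.1, hx.symm⟩

theorem splittingNumber_eq_card_filter {G : Type*} [Group G] [Fintype G]
    (D : Finset (ConjClasses G)) (H : Subgroup G) :
    splittingNumber D H = #{d | ConjClasses.map H.subtype d ∈ D} - #D := by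
  rw [splittingNumber, Nat.card_eq_fintype_card, ← Set.toFinset_card]
  congr
  ext
  simp

theorem pow_splittingNumber_le_HF {G : Type*} [Group G] [Fintype G] {D : Finset (ConjClasses G)}
    {ξ : ConjClasses G → ℕ} {H : Subgroup G} (hmeet : ∀ c ∈ D, ∃ g ∈ H, ConjClasses.mk g = c)
    (hgen : Subgroup.closure {g : G | g ∈ H ∧ ConjClasses.mk g ∈ D} = H)
    (hξ : ∀ c ∈ D, 1 ≤ ξ c) {n q : ℕ}
    (hn : Fintype.card (ConjClasses H) * q + Fintype.card G ≤ n) :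
    q ^ splittingNumber D H ≤ HF D ξ H (Monoid.exponent G * n) := by
  have hlift : ∀ c ∈ D, ∃ d : ConjClasses H, ConjClasses.map H.subtype d = c := fun c hc => by
    obtain ⟨g, hg, rfl⟩ := hmeet c hc
    exact ⟨ConjClasses.mk ⟨g, hg⟩, rfl⟩
  choose! s hs using hlift
  have hW : ∀ c ∈ D, #{g | g ∈ H ∧ ConjClasses.mk g = c} + Fintype.card (ConjClasses H) * q ≤
      n * ξ c := fun c hc => by
    have := card_le_univ ({g | g ∈ H ∧ ConjClasses.mk g = c} : Finset G)
    nlinarith [hξ c hc]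
  obtain ⟨F, hF, hFT, M, hMF, hMsum⟩ := exists_fiberwise_sum_eq (ConjClasses.map H.subtype) D s hs
    q (fun c => n * ξ c - #{g | g ∈ H ∧ ConjClasses.mk g = c}) fun c hc => by have := hW c hc; omega
  let Φ (f : F → Fin q) : {x : HurwitzCl G // ∃ l : List G, x = HurwitzCl.mk l ∧
      IsComponentList D ξ (Monoid.exponent G * n) l ∧ Subgroup.closure {g : G | g ∈ l} = H} :=
    ⟨_, _, rfl, isComponentList_paddedTuple (M f) ξ n fun c hc => by
      rw [hMsum f c hc]; have := hW c hc; omega, closure_paddedTuple (M f) hgen⟩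
  have hΦ : Function.Injective Φ := fun f f' hff' => funext fun i => Fin.ext <| by
    rw [← hMF, ← hMF]
    exact apply_eq_of_braidEquiv_paddedTuple (Quotient.exact (congrArg Subtype.val hff'))
      (hFT i i.2)
  have := finite_componentsWithGroup D ξ H (Monoid.exponent G * n)
  calc q ^ splittingNumber D H = Nat.card (F → Fin q) := by
        simp [splittingNumber_eq_card_filter, hF]
    _ ≤ HF D ξ H (Monoid.exponent G * n) := Nat.card_le_card_of_injective Φ hΦ

theorem pow_splittingNumber_bigO_HF_general
    (G : Type*) [Group G] [Fintype G]
    (D : Finset (ConjClasses G))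
    (ξ : ConjClasses G → ℕ) (hξ : ∀ c ∈ D, 1 ≤ ξ c)
    (H : Subgroup G) (hHne : H ≠ ⊥) (hHgen : DGenerated D H) :
    ∃ C : ℕ, 0 < C ∧ ∃ N : ℕ, ∀ n ≥ N,
      n ^ splittingNumber D H ≤ C * HF D ξ H (Monoid.exponent G * n) := by
  obtain ⟨hmeet, hgen⟩ := hHgen.resolve_left hHne
  set K := Fintype.card (ConjClasses H) + 1
  refine ⟨(2 * K) ^ splittingNumber D H, by positivity, K * (Fintype.card G + 1), fun n hn => ?_⟩
  have hq : Fintype.card G + 1 ≤ n / K := (Nat.le_div_iff_mul_le (by omega)).mpr (by linarith)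
  have hKq : Fintype.card (ConjClasses H) * (n / K) + n / K ≤ n := by
    simpa [K, add_mul] using Nat.mul_div_le n K
  have hn_le : n ≤ 2 * K * (n / K) := by nlinarith [Nat.lt_div_mul_add (a := n) (b := K) (by omega)]
  calc n ^ splittingNumber D H ≤ (2 * K * (n / K)) ^ splittingNumber D H :=
        Nat.pow_le_pow_left hn_le _
    _ = (2 * K) ^ splittingNumber D H * (n / K) ^ splittingNumber D H := mul_pow _ _ _
    _ ≤ _ := Nat.mul_le_mul_left _ (pow_splittingNumber_le_HF hmeet hgen hξ (by omega))

/-- for a nontrivial `D`-generated subgroup `H`,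
`n^{Ω_D(H)} = O(HF_H(exp(G)·n))`. -/
theorem pow_splittingNumber_bigO_HF
    (G : Type*) [Group G] [Fintype G] [Nontrivial G]
    (D : Finset (ConjClasses G))
    (hD : ∀ c ∈ D, (1 : G) ∉ ConjClasses.carrier c)
    (hDgen : Subgroup.closure {g : G | ConjClasses.mk g ∈ D} = ⊤)
    (ξ : ConjClasses G → ℕ) (hξ : ∀ c ∈ D, 1 ≤ ξ c)
    (H : Subgroup G) (hHne : H ≠ ⊥) (hHgen : DGenerated D H) :
    ∃ C : ℕ, 0 < C ∧ ∃ N : ℕ, ∀ n ≥ N,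
      n ^ splittingNumber D H ≤ C * HF D ξ H (Monoid.exponent G * n) :=
  pow_splittingNumber_bigO_HF_general G D ξ hξ H hHne hHgen
end

section
/- Let d ≥ 2 and let k be an algebraically closed field of characteristic 0 or of characteristic > d. A point x = (x_{ij})_{1≤i<j≤d} ∈ k^{d(d−1)/2} satisfies x_{ij}x_{jk} = x_{ik}x_{jk} = x_{ij}x_{ik} for all 1 ≤ i < j < k ≤ d if and only if there exist pairwise disjoint subsets A_1,…,A_l of {1,…,d} and scalars λ_1,…,λ_l ∈ k such that x = λ_1 e_{A_1} + ⋯ + λ_l e_{A_l}. Equivalently, the solution set of these equations in k^{d(d−1)/2} is the union, over all families {A_1,…,A_l} of pairwise disjoint subsets of {1,…,d}, of the k-linear spans Span_k(e_{A_1},…,e_{A_l}). -/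
/-- `e_A` as a point of `k^{d(d-1)/2}`: the coordinate at `(i,j)` (with `i < j`)
is `1` if both `i, j ∈ A`, and `0` otherwise. -/
def eVec {d : ℕ} (k : Type*) [Field k] (A : Finset (Fin d)) :
    {p : Fin d × Fin d // p.1 < p.2} → k :=
  fun p => if p.val.1 ∈ A ∧ p.val.2 ∈ A then 1 else 0

/-- symmetrized coordinate function -/
noncomputable def fS {d : ℕ} {k : Type*} [Field k]
    (x : {p : Fin d × Fin d // p.1 < p.2} → k) (i j : Fin d) : k :=
  if h : i < j then x ⟨(i, j), h⟩ else if h : j < i then x ⟨(j, i), h⟩ else 0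

lemma fS_lt {d : ℕ} {k : Type*} [Field k] (x : {p : Fin d × Fin d // p.1 < p.2} → k)
    {i j : Fin d} (h : i < j) : fS x i j = x ⟨(i, j), h⟩ := dif_pos h

lemma fS_symm {d : ℕ} {k : Type*} [Field k] (x : {p : Fin d × Fin d // p.1 < p.2} → k)
    (i j : Fin d) : fS x i j = fS x j i := by
  unfold fS
  rcases lt_trichotomy i j with h | h | h
  · rw [dif_pos h, dif_neg (asymm h), dif_pos h]
  · subst h; rfl
  · rw [dif_neg (asymm h), dif_pos h, dif_pos h]

lemma tripleEq {k : Type*} [Field k] {a b c : k} (h1 : a * b = c * b) (h2 : c * b = a * c)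
    (h : (a ≠ 0 ∧ b ≠ 0) ∨ (a ≠ 0 ∧ c ≠ 0) ∨ (b ≠ 0 ∧ c ≠ 0)) :
    a = b ∧ a = c := by
  have key : ∀ a' b' c' : k, a' * b' = c' * b' → c' * b' = a' * c' → a' ≠ 0 → c' ≠ 0 →
      a' = b' ∧ a' = c' := by
    intro a' b' c' h1' h2' ha hc
    have hb : b' = a' := by
      have := h2'.symm
      rw [mul_comm c' b'] at h2'
      exact mul_right_cancel₀ hc (by linear_combination h2')
    subst hb
    exact ⟨rfl, mul_right_cancel₀ ha h1'⟩
  rcases h with ⟨ha, hb⟩ | ⟨ha, hc⟩ | ⟨hb, hc⟩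
  · have hac : a = c := mul_right_cancel₀ hb h1
    subst hac
    have : b = a := by
      have h2' : a * b = a * a := h2
      exact mul_left_cancel₀ ha h2'
    exact ⟨this.symm, rfl⟩
  · exact key a b c h1 h2 ha hc
  · have hac : a = c := mul_right_cancel₀ hb h1
    subst hac
    have : b = a := mul_left_cancel₀ hc h2
    exact ⟨this.symm, rfl⟩

lemma allEq {d : ℕ} {k : Type*} [Field k] (x : {p : Fin d × Fin d // p.1 < p.2} → k)
    (H : ∀ (i j l : Fin d) (hij : i < j) (hjl : j < l),
        x ⟨(i, j), hij⟩ * x ⟨(j, l), hjl⟩ = x ⟨(i, l), hij.trans hjl⟩ * x ⟨(j, l), hjl⟩ ∧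
        x ⟨(i, l), hij.trans hjl⟩ * x ⟨(j, l), hjl⟩ = x ⟨(i, j), hij⟩ * x ⟨(i, l), hij.trans hjl⟩)
    {a b c : Fin d} (hab : a ≠ b) (hbc : b ≠ c) (hac : a ≠ c)
    (h1 : fS x a b ≠ 0) (h2 : fS x b c ≠ 0) :
    fS x a b = fS x b c ∧ fS x a b = fS x a c := by
  have ord : ∀ i j l : Fin d, i < j → j < l →
      ((fS x i j ≠ 0 ∧ fS x j l ≠ 0) ∨ (fS x i j ≠ 0 ∧ fS x i l ≠ 0) ∨
        (fS x j l ≠ 0 ∧ fS x i l ≠ 0)) →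
      fS x i j = fS x j l ∧ fS x i j = fS x i l := by
    intro i j l hij hjl hnz
    obtain ⟨e1, e2⟩ := H i j l hij hjl
    rw [fS_lt x hij, fS_lt x hjl, fS_lt x (hij.trans hjl)] at hnz ⊢
    exact tripleEq e1 e2 hnz
  rcases hab.lt_or_gt with hab' | hab'
  · rcases hbc.lt_or_gt with hbc' | hbc'
    · -- a < b < c
      exact ord a b c hab' hbc' (Or.inl ⟨h1, h2⟩)
    · rcases hac.lt_or_gt with hac' | hac'
      · -- a < c < b
        obtain ⟨e1, e2⟩ := ord a c b hac' hbc' (Or.inr (Or.inr ⟨by rwa [← fS_symm], h1⟩))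
        constructor
        · rw [← e2, e1]; exact fS_symm x c b
        · exact e2.symm
      · -- c < a < b
        obtain ⟨e1, e2⟩ := ord c a b hac' hab' (Or.inr (Or.inr ⟨h1, by rwa [← fS_symm]⟩))
        constructor
        · rw [← e1, e2]; exact fS_symm x c b
        · rw [← e1]; exact fS_symm x c a
  · rcases hac.lt_or_gt with hac' | hac'
    · -- b < a < c
      obtain ⟨e1, e2⟩ := ord b a c hab' hac' (Or.inr (Or.inl ⟨by rwa [fS_symm], h2⟩))
      constructor
      · rw [fS_symm x a b]; exact e2
      · rw [fS_symm x a b]; exact e1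
    · rcases hbc.lt_or_gt with hbc' | hbc'
      · -- b < c < a
        obtain ⟨e1, e2⟩ := ord b c a hbc' hac' (Or.inr (Or.inl ⟨h2, by rwa [fS_symm]⟩))
        constructor
        · rw [fS_symm x a b]; exact e2.symm
        · rw [fS_symm x a b, ← e2, e1]; exact fS_symm x c a
      · -- c < b < a
        obtain ⟨e1, e2⟩ := ord c b a hbc' hab' (Or.inl ⟨by rwa [fS_symm], by rwa [fS_symm]⟩)
        constructor
        · rw [fS_symm x a b, ← e1]; exact fS_symm x c b
        · rw [fS_symm x a b, ← e1, e2]; exact fS_symm x c a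

lemma fS_diag {d : ℕ} {k : Type*} [Field k] (x : {p : Fin d × Fin d // p.1 < p.2} → k)
    (i : Fin d) : fS x i i = 0 := by
  unfold fS
  simp

def relX {d : ℕ} {k : Type*} [Field k] (x : {p : Fin d × Fin d // p.1 < p.2} → k)
    (i j : Fin d) : Prop := i = j ∨ fS x i j ≠ 0

def minsX {d : ℕ} {k : Type*} [Field k] (x : {p : Fin d × Fin d // p.1 < p.2} → k)
    (t : Fin d) : Prop :=
  (∃ j, j ≠ t ∧ fS x t j ≠ 0) ∧ ∀ s, relX x s t → t ≤ s

open Classical in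
noncomputable def AX {d : ℕ} {k : Type*} [Field k] (x : {p : Fin d × Fin d // p.1 < p.2} → k)
    (t : Fin d) : Finset (Fin d) :=
  if minsX x t then Finset.univ.filter (fun j => relX x t j) else ∅

open Classical in
noncomputable def lamX {d : ℕ} {k : Type*} [Field k] (x : {p : Fin d × Fin d // p.1 < p.2} → k)
    (t : Fin d) : k :=
  if h : minsX x t then fS x t h.1.choose else 0

lemma mem_AX {d : ℕ} {k : Type*} [Field k] (x : {p : Fin d × Fin d // p.1 < p.2} → k)
    {t a : Fin d} : a ∈ AX x t ↔ minsX x t ∧ relX x t a := by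
  classical
  by_cases h : minsX x t <;> simp [AX, h]

lemma relX_symm {d : ℕ} {k : Type*} [Field k] (x : {p : Fin d × Fin d // p.1 < p.2} → k)
    {i j : Fin d} (h : relX x i j) : relX x j i := by
  rcases h with h | h
  · exact Or.inl h.symm
  · exact Or.inr (by rwa [fS_symm])

lemma fS_ne_of {d : ℕ} {k : Type*} [Field k] {x : {p : Fin d × Fin d // p.1 < p.2} → k}
    {i j : Fin d} (h : fS x i j ≠ 0) : i ≠ j := fun hij => h (hij ▸ fS_diag x i)

lemma relX_trans {d : ℕ} {k : Type*} [Field k] {x : {p : Fin d × Fin d // p.1 < p.2} → k}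
    (H : ∀ (i j l : Fin d) (hij : i < j) (hjl : j < l),
        x ⟨(i, j), hij⟩ * x ⟨(j, l), hjl⟩ = x ⟨(i, l), hij.trans hjl⟩ * x ⟨(j, l), hjl⟩ ∧
        x ⟨(i, l), hij.trans hjl⟩ * x ⟨(j, l), hjl⟩ = x ⟨(i, j), hij⟩ * x ⟨(i, l), hij.trans hjl⟩)
    {i j l : Fin d} (h1 : relX x i j) (h2 : relX x j l) : relX x i l := by
  rcases h1 with rfl | h1
  · exact h2
  rcases h2 with rfl | h2
  · exact Or.inr h1
  by_cases hil : i = l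
  · exact Or.inl hil
  · have := allEq x H (fS_ne_of h1) (fS_ne_of h2) hil h1 h2
    exact Or.inr (by rw [← this.2]; exact h1)

lemma forward_dir {d : ℕ} {k : Type*} [Field k]
    (x : {p : Fin d × Fin d // p.1 < p.2} → k)
    (H : ∀ (i j l : Fin d) (hij : i < j) (hjl : j < l),
        x ⟨(i, j), hij⟩ * x ⟨(j, l), hjl⟩ = x ⟨(i, l), hij.trans hjl⟩ * x ⟨(j, l), hjl⟩ ∧
        x ⟨(i, l), hij.trans hjl⟩ * x ⟨(j, l), hjl⟩ = x ⟨(i, j), hij⟩ * x ⟨(i, l), hij.trans hjl⟩) :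
    ∃ (m : ℕ) (A : Fin m → Finset (Fin d)) (lam : Fin m → k),
      (∀ s t : Fin m, s ≠ t → Disjoint (A s) (A t)) ∧
      x = ∑ t : Fin m, lam t • eVec k (A t) := by
  classical
  refine ⟨d, AX x, lamX x, ?_, ?_⟩
  · -- disjointness
    intro s t hst
    rw [Finset.disjoint_left]
    intro a has hat
    rw [mem_AX] at has hat
    have hrst : relX x s t := relX_trans H has.2 (relX_symm x hat.2)
    have h1 : t ≤ s := hat.1.2 s hrst
    have h2 : s ≤ t := has.1.2 t (relX_symm x hrst)
    exact hst (le_antisymm h2 h1)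
  · funext p
    obtain ⟨⟨i, j⟩, hij⟩ := p
    have hij' : i ≠ j := ne_of_lt hij
    rw [Finset.sum_apply]
    by_cases h0 : fS x i j = 0
    · rw [show x ⟨(i, j), hij⟩ = 0 from by rw [← fS_lt x hij]; exact h0]
      symm
      apply Finset.sum_eq_zero
      intro t _
      simp only [Pi.smul_apply, smul_eq_mul, eVec]
      by_cases hm : i ∈ AX x t ∧ j ∈ AX x t
      · exfalso
        obtain ⟨hi, hj⟩ := hm
        rw [mem_AX] at hi hj
        have : relX x i j := relX_trans H (relX_symm x hi.2) hj.2
        rcases this with h | h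
        · exact hij' h
        · exact h h0
      · rw [if_neg hm, mul_zero]
    · -- nonzero case
      have hrij : relX x i j := Or.inr h0
      have hCne : (Finset.univ.filter (fun j' => relX x i j')).Nonempty :=
        ⟨i, Finset.mem_filter.mpr ⟨Finset.mem_univ _, Or.inl rfl⟩⟩
      set t₀ := (Finset.univ.filter (fun j' => relX x i j')).min' hCne with ht₀def
      have hrit : relX x i t₀ :=
        (Finset.mem_filter.mp (Finset.min'_mem _ hCne)).2
      have hmin : ∀ s, relX x i s → t₀ ≤ s := fun s hs =>
        Finset.min'_le _ s (Finset.mem_filter.mpr ⟨Finset.mem_univ _, hs⟩)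
      have hrti : relX x t₀ i := relX_symm x hrit
      have hrtj : relX x t₀ j := relX_trans H hrti hrij
      have hminst : minsX x t₀ := by
        constructor
        · by_cases hti : t₀ = i
          · exact ⟨j, by rw [hti]; exact hij'.symm, by rw [hti]; exact h0⟩
          · refine ⟨i, fun h => hti h.symm, ?_⟩
            rcases hrti with h | h
            · exact absurd h hti
            · exact h
        · intro s hs
          exact hmin s (relX_trans H hrit (relX_symm x hs))
      obtain ⟨hj₀ne, hj₀nz⟩ := hminst.1.choose_spec
      set j₀ := hminst.1.choose with hj₀def
      have hub : ∀ u v : Fin d, u ≠ t₀ → v ≠ t₀ → fS x t₀ u ≠ 0 → fS x t₀ v ≠ 0 →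
          fS x t₀ u = fS x t₀ v := by
        intro u v hu hv hfu hfv
        by_cases huv : u = v
        · rw [huv]
        · have h3 := allEq x H hu (fun h => hv h.symm) huv
            (by rwa [fS_symm x u t₀]) hfv
          rw [fS_symm x t₀ u]
          exact h3.1
      have hval : fS x i j = fS x t₀ j₀ := by
        by_cases hti : t₀ = i
        · have h1 : fS x t₀ j ≠ 0 := by rw [hti]; exact h0
          have h2 := hub j j₀ (by rw [hti]; exact hij'.symm) hj₀ne h1 hj₀nz
          rw [← h2, hti]
        · by_cases htj : t₀ = j
          · have h1 : fS x t₀ i ≠ 0 := by rw [htj, fS_symm x j i]; exact h0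
            have h2 := hub i j₀ (fun h => hti h.symm) hj₀ne h1 hj₀nz
            rw [← h2, htj, fS_symm x j i]
          · have hfti : fS x t₀ i ≠ 0 := by
              rcases hrti with h | h
              · exact absurd h hti
              · exact h
            have h3 := allEq x H hti hij' htj hfti h0
            rw [← h3.1]
            exact hub i j₀ (fun h => hti h.symm) hj₀ne hfti hj₀nz
      have hit₀ : i ∈ AX x t₀ := mem_AX x |>.mpr ⟨hminst, hrti⟩
      have hjt₀ : j ∈ AX x t₀ := mem_AX x |>.mpr ⟨hminst, hrtj⟩
      symm
      rw [Finset.sum_eq_single t₀]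
      · simp only [Pi.smul_apply, smul_eq_mul, eVec, hit₀, hjt₀, and_self, if_true, mul_one]
        have hlam : lamX x t₀ = fS x t₀ j₀ := by
          rw [lamX, dif_pos hminst]
        rw [hlam, ← hval, fS_lt x hij]
      · intro s _ hst
        by_cases hm : i ∈ AX x s ∧ j ∈ AX x s
        · exfalso
          obtain ⟨hi, _⟩ := hm
          rw [mem_AX] at hi
          have hrst : relX x s t₀ := relX_trans H hi.2 hrit
          have h1 : t₀ ≤ s := hminst.2 s hrst
          have h2 : s ≤ t₀ := hi.1.2 t₀ (relX_symm x hrst)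
          exact hst (le_antisymm h2 h1)
        · simp only [Pi.smul_apply, smul_eq_mul, eVec, if_neg hm, mul_zero]
      · intro h
        exact absurd (Finset.mem_univ t₀) h

/-- a point `x = (x_{ij})` of `k^{d(d-1)/2}` satisfies the relations
`x_{ij}x_{jk} = x_{ik}x_{jk} = x_{ij}x_{ik}` for all `i < j < k` if and only if it is a
linear combination `Σ λ_t e_{A_t}` for pairwise disjoint subsets `A_1,…,A_m` of
`{1,…,d}`; equivalently, the solution set is the union of the spans
`Span_k(e_{A_1},…,e_{A_m})` over families of pairwise disjoint subsets. -/
theorem spectrum_symmetricGroup_points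
    (d : ℕ) (hd : 2 ≤ d) (k : Type*) [Field k] [IsAlgClosed k]
    (hchar : CharZero k ∨ ∃ p : ℕ, CharP k p ∧ d < p)
    (x : {p : Fin d × Fin d // p.1 < p.2} → k) :
    (∀ (i j l : Fin d) (hij : i < j) (hjl : j < l),
        x ⟨(i, j), hij⟩ * x ⟨(j, l), hjl⟩ = x ⟨(i, l), hij.trans hjl⟩ * x ⟨(j, l), hjl⟩ ∧
        x ⟨(i, l), hij.trans hjl⟩ * x ⟨(j, l), hjl⟩ = x ⟨(i, j), hij⟩ * x ⟨(i, l), hij.trans hjl⟩)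
      ↔
    ∃ (m : ℕ) (A : Fin m → Finset (Fin d)) (lam : Fin m → k),
      (∀ s t : Fin m, s ≠ t → Disjoint (A s) (A t)) ∧
      x = ∑ t : Fin m, lam t • eVec k (A t) := by
  classical
  constructor
  · exact forward_dir x
  · rintro ⟨m, A, lam, hA, rfl⟩ i j l hij hjl
    -- a point a can lie in at most one A t
    have huniq : ∀ (a : Fin d) (s t : Fin m), a ∈ A s → a ∈ A t → s = t := by
      intro a s t hs ht
      by_contra h
      exact Finset.disjoint_left.mp (hA s t h) hs ht
    -- value of the sum at a pair contained in some A t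
    have hval2 : ∀ (i' j' : Fin d) (h : i' < j') (t : Fin m), i' ∈ A t → j' ∈ A t →
        (∑ u : Fin m, lam u • eVec k (A u)) ⟨(i', j'), h⟩ = lam t := by
      intro i' j' h t hi hj
      rw [Finset.sum_apply, Finset.sum_eq_single t]
      · simp [eVec, hi, hj]
      · intro s _ hst
        have : ¬(i' ∈ A s ∧ j' ∈ A s) := fun ⟨hi', _⟩ => hst (huniq i' s t hi' hi)
        simp [eVec, this]
      · intro h'
        exact absurd (Finset.mem_univ t) h'
    -- if the value is nonzero, the pair lies in some A t
    have hval1 : ∀ (i' j' : Fin d) (h : i' < j'),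
        (∑ u : Fin m, lam u • eVec k (A u)) ⟨(i', j'), h⟩ ≠ 0 →
        ∃ t : Fin m, i' ∈ A t ∧ j' ∈ A t := by
      intro i' j' h hne
      by_contra hc
      push_neg at hc
      apply hne
      rw [Finset.sum_apply]
      apply Finset.sum_eq_zero
      intro t _
      have : ¬(i' ∈ A t ∧ j' ∈ A t) := fun ⟨h1, h2⟩ => hc t h1 h2
      simp [eVec, this]
    by_cases h3 : ∃ t : Fin m, i ∈ A t ∧ j ∈ A t ∧ l ∈ A t
    · obtain ⟨t, hi, hj, hl⟩ := h3
      rw [hval2 i j hij t hi hj, hval2 j l hjl t hj hl, hval2 i l (hij.trans hjl) t hi hl]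
      exact ⟨rfl, rfl⟩
    · have p1 : (∑ u : Fin m, lam u • eVec k (A u)) ⟨(i, j), hij⟩ = 0 ∨
          (∑ u : Fin m, lam u • eVec k (A u)) ⟨(j, l), hjl⟩ = 0 := by
        by_contra hc
        push_neg at hc
        obtain ⟨t, hit, hjt⟩ := hval1 i j hij hc.1
        obtain ⟨s, hjs, hls⟩ := hval1 j l hjl hc.2
        exact h3 ⟨t, hit, hjt, (huniq j s t hjs hjt) ▸ hls⟩
      have p2 : (∑ u : Fin m, lam u • eVec k (A u)) ⟨(i, j), hij⟩ = 0 ∨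
          (∑ u : Fin m, lam u • eVec k (A u)) ⟨(i, l), hij.trans hjl⟩ = 0 := by
        by_contra hc
        push_neg at hc
        obtain ⟨t, hit, hjt⟩ := hval1 i j hij hc.1
        obtain ⟨s, his, hls⟩ := hval1 i l (hij.trans hjl) hc.2
        exact h3 ⟨t, hit, hjt, (huniq i s t his hit) ▸ hls⟩
      have p3 : (∑ u : Fin m, lam u • eVec k (A u)) ⟨(j, l), hjl⟩ = 0 ∨
          (∑ u : Fin m, lam u • eVec k (A u)) ⟨(i, l), hij.trans hjl⟩ = 0 := by
        by_contra hc
        push_neg at hc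
        obtain ⟨t, hjt, hlt⟩ := hval1 j l hjl hc.1
        obtain ⟨s, his, hls⟩ := hval1 i l (hij.trans hjl) hc.2
        exact h3 ⟨t, (huniq l s t hls hlt) ▸ his, hjt, hlt⟩
      constructor
      · rcases p1 with h | h <;> rcases p3 with h' | h' <;> rw [h] <;> first
          | (rw [h']; ring)
          | (try rw [h']) <;> ring
      · rcases p2 with h | h <;> rcases p3 with h' | h' <;>
          (try rw [h]) <;> (try rw [h']) <;> ring
end
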